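/- arXiv:2103.14518 — 5 statements merged into one kernel-verified Lean document; each statement's English description precedes it below -/
import Mathlib

section
/- Under hypotheses H(A), H(J), H(γ,f) and (H_s), for every fixed w ∈ V the functional v ↦ ℒ(w,v) = F_A(v) − ⟨f,v⟩ + J(γw, γv) is strictly convex on V. -/
open Filter Topology

/-- Clarke generalized directional derivative of `j` at `x` in direction `v`. -/
noncomputable def clarkeDeriv {Y : Type*} [NormedAddCommGroup Y] [NormedSpace ℝ Y]
    (j : Y → ℝ) (x v : Y) : ℝ :=
  Filter.limsup (fun p : Y × ℝ => (j (p.1 + p.2 • v) - j p.1) / p.2)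
    ((nhds x) ×ˢ (nhdsWithin (0 : ℝ) (Set.Ioi (0 : ℝ))))

/-- Clarke generalized subdifferential of `j` at `x`. -/
noncomputable def clarkeSubdiff {Y : Type*} [NormedAddCommGroup Y] [NormedSpace ℝ Y]
    (j : Y → ℝ) (x : Y) : Set (Y →L[ℝ] ℝ) :=
  {ξ : Y →L[ℝ] ℝ | ∀ v : Y, ξ v ≤ clarkeDeriv j x v}

/-!
`F_A` is `m_A`-strongly convex because its derivative `A` is strongly monotone, and `J (γ w) ∘ γ`
is `-m_α ‖γ‖²`-strongly (i.e. weakly) convex because of the relaxed monotonicity of the Clarke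
derivative; the linear term does not change the modulus, so the sum has the positive modulus
`m_A - m_α ‖γ‖²`, hence is strictly convex.

Both moduli come from one comparison argument. If an upper bound `D` for the directional
derivatives of `φ` satisfies `D x (y - x) + D y (x - y) ≤ -μ ‖x - y‖²`, move `x` and `y`
simultaneously towards `z = a x + b y` along `x + t b (y - x)` and `y + t a (x - y)`. The two
points stay `(1 - t)(y - x)` apart, so the right Dini derivative of `a φ(·) + b φ(·)` is at most
`-a b μ (1 - t) ‖x - y‖²`, and integrating over `t ∈ [0, 1]` gives
`φ z ≤ a φ x + b φ y - a b μ ‖x - y‖² / 2`.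
-/

open Set

-- No boundedness hypothesis is needed: both sides are the same `sInf`, junk values included.
theorem Real.limsup_const_mul_of_pos {ι : Type*} {F : Filter ι} {u : ι → ℝ} {c : ℝ} (hc : 0 < c) :
    limsup (fun i => c * u i) F = c * limsup u F := by
  rw [limsup_eq, limsup_eq, ← smul_eq_mul, ← Real.sInf_smul_of_nonneg hc.le]
  congr 1
  ext a
  simp only [mem_smul_set_iff_inv_smul_mem₀ hc.ne', mem_ofPred_eq, smul_eq_mul,
    le_inv_mul_iff₀ hc]

theorem map_mul_left_nhdsGT_zero {c : ℝ} (hc : 0 < c) : map (c * ·) (𝓝[>] (0 : ℝ)) = 𝓝[>] 0 := by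
  simpa [comap_mulLeft_nhdsGT_zero hc] using
    map_comap_of_surjective (mul_left_surjective₀ hc.ne') (𝓝[>] (0 : ℝ))

section Clarke

variable {Y : Type*} [NormedAddCommGroup Y] [NormedSpace ℝ Y]

theorem clarkeDeriv_smul (j : Y → ℝ) (x v : Y) {c : ℝ} (hc : 0 < c) :
    clarkeDeriv j x (c • v) = c * clarkeDeriv j x v := by
  set Q : Y × ℝ → ℝ := fun p => (j (p.1 + p.2 • v) - j p.1) / p.2
  have hmap : map (Prod.map id (c * ·)) ((𝓝 x) ×ˢ 𝓝[>] (0 : ℝ)) = (𝓝 x) ×ˢ 𝓝[>] 0 := by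
    rw [← prod_map_map_eq', map_id, map_mul_left_nhdsGT_zero hc]
  calc clarkeDeriv j x (c • v)
      = limsup (fun p => c * (Q ∘ Prod.map id (c * ·)) p) ((𝓝 x) ×ˢ 𝓝[>] (0 : ℝ)) := by
        refine congrArg (limsup · _) (funext fun p => ?_)
        simp only [Q, Function.comp, Prod.map, id, mul_smul, smul_comm p.2 c v]
        rw [mul_div_assoc', mul_div_mul_left _ _ hc.ne']
    _ = c * clarkeDeriv j x v := by
        rw [Real.limsup_const_mul_of_pos hc, limsup_comp, hmap]; rfl

theorem LocallyLipschitz.isBoundedUnder_clarkeQuotient {j : Y → ℝ} (hj : LocallyLipschitz j)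
    (x v : Y) :
    IsBoundedUnder (· ≤ ·) ((𝓝 x) ×ˢ 𝓝[>] (0 : ℝ))
      (fun p : Y × ℝ => (j (p.1 + p.2 • v) - j p.1) / p.2) := by
  obtain ⟨K, s, hs, hK⟩ := hj x
  have hle : (𝓝 x) ×ˢ 𝓝[>] (0 : ℝ) ≤ 𝓝 (x, 0) := by
    rw [nhds_prod_eq]; exact prod_mono le_rfl nhdsWithin_le_nhds
  have hmove : Tendsto (fun p : Y × ℝ => p.1 + p.2 • v) (𝓝 (x, 0)) (𝓝 x) :=
    (by fun_prop : Continuous fun p : Y × ℝ => p.1 + p.2 • v).tendsto' _ _ (by simp)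
  refine isBoundedUnder_of_eventually_le (a := K * ‖v‖) ?_
  filter_upwards [((continuous_fst.tendsto _).mono_left hle).eventually hs,
    (hmove.mono_left hle).eventually hs, tendsto_snd.eventually self_mem_nhdsWithin]
    with p hp₁ hp₂ (hp : 0 < p.2)
  have hlip := hK.dist_le_mul _ hp₂ _ hp₁
  rw [Real.dist_eq, dist_eq_norm, add_sub_cancel_left, norm_smul, Real.norm_of_nonneg hp.le] at hlip
  rw [div_le_iff₀ hp]
  calc j (p.1 + p.2 • v) - j p.1 ≤ |j (p.1 + p.2 • v) - j p.1| := le_abs_self _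
    _ ≤ K * (p.2 * ‖v‖) := hlip
    _ = K * ‖v‖ * p.2 := by ring

theorem LocallyLipschitz.eventually_div_lt_of_clarkeDeriv_lt {j : Y → ℝ} (hj : LocallyLipschitz j)
    {x v : Y} {r : ℝ} (h : clarkeDeriv j x v < r) :
    ∀ᶠ l in 𝓝[>] (0 : ℝ), (j (x + l • v) - j x) / l < r :=
  (tendsto_const_nhds.prodMk tendsto_id).eventually
    (eventually_lt_of_limsup_lt h (hj.isBoundedUnder_clarkeQuotient x v))

end Clarke

theorem le_sub_half_of_slope_lt_mul_sub_one {ψ : ℝ → ℝ} {k : ℝ} (hψ : ContinuousOn ψ (Icc 0 1))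
    (hslope : ∀ t ∈ Ico (0 : ℝ) 1, ∀ r, k * (t - 1) < r → ∀ᶠ z in 𝓝[>] t, slope ψ t z < r) :
    ψ 1 ≤ ψ 0 - k / 2 := by
  have hB : ∀ t, HasDerivAt (fun u : ℝ => ψ 0 + k * (u ^ 2 / 2 - u)) (k * (t - 1)) t := fun t =>
    ((((hasDerivAt_pow 2 t).div_const 2).sub (hasDerivAt_id t)).const_mul k).const_add (ψ 0)
      |>.congr_deriv (by norm_num)
  have := image_le_of_liminf_slope_right_le_deriv_boundary hψ (by simp) (by fun_prop)
    (fun t _ => (hB t).hasDerivWithinAt) (fun t ht r hr => (hslope t ht r hr).frequently)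
    (right_mem_Icc.2 zero_le_one)
  linarith

section UpperDerivative

variable {E : Type*} [NormedAddCommGroup E] [NormedSpace ℝ E] {φ : E → ℝ}

theorem continuous_comp_line_of_continuousAt_zero
    (h : ∀ x v, ContinuousAt (fun t : ℝ => φ (x + t • v)) 0) (x v : E) :
    Continuous fun t : ℝ => φ (x + t • v) := by
  refine continuous_iff_continuousAt.2 fun t => ?_
  have hshift : (fun s : ℝ => φ (x + s • v)) = (fun s => φ (x + t • v + s • v)) ∘ (· - t) := by
    ext s; simp [add_assoc, ← add_smul]
  rw [hshift]
  exact (h (x + t • v) v).comp_of_eq (by fun_prop) (sub_self t)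

theorem eventually_slope_comp_line_lt {D : E → E → ℝ}
    (hD : ∀ x v r, D x v < r → ∀ᶠ l in 𝓝[>] (0 : ℝ), (φ (x + l • v) - φ x) / l < r)
    (x v : E) (t : ℝ) {r : ℝ} (hr : D (x + t • v) v < r) :
    ∀ᶠ z in 𝓝[>] t, slope (fun s : ℝ => φ (x + s • v)) t z < r := by
  have hsub : Tendsto (· - t) (𝓝[>] t) (𝓝[>] (0 : ℝ)) := by
    refine tendsto_nhdsWithin_iff.2 ⟨?_, ?_⟩
    · simpa using (tendsto_id.sub_const t).mono_left (nhdsWithin_le_nhds (a := t) (s := Ioi t))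
    · filter_upwards [self_mem_nhdsWithin] with z hz using sub_pos.2 (mem_Ioi.1 hz)
  filter_upwards [hsub.eventually (hD _ v r hr)] with z hz
  rwa [slope_def_field, show x + z • v = x + t • v + (z - t) • v by
    rw [add_assoc, ← add_smul, add_sub_cancel]]

theorem upperDeriv_add_le_of_sub_eq_smul {D : E → E → ℝ} {μ : ℝ}
    (hD_smul : ∀ x v {c : ℝ}, 0 < c → D x (c • v) = c * D x v)
    (hD_mono : ∀ x y, D x (y - x) + D y (x - y) ≤ -μ * ‖x - y‖ ^ 2)
    {p q u : E} {s : ℝ} (hs : 0 < s) (hpq : q - p = s • u) :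
    D p u + D q (-u) ≤ -μ * s * ‖u‖ ^ 2 := by
  have hqp : p - q = s • -u := by rw [smul_neg, ← hpq, neg_sub]
  have h := hD_mono p q
  rw [hpq, hqp, hD_smul _ _ hs, hD_smul _ _ hs, norm_smul, norm_neg,
    Real.norm_of_nonneg hs.le] at h
  have : s * (D p u + D q (-u)) ≤ s * (-μ * s * ‖u‖ ^ 2) := by linarith
  exact le_of_mul_le_mul_left this hs

theorem strongConvexOn_univ_of_upperDeriv {D : E → E → ℝ} {μ : ℝ}
    (hcont : ∀ x v, ContinuousAt (fun t : ℝ => φ (x + t • v)) 0)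
    (hD : ∀ x v r, D x v < r → ∀ᶠ l in 𝓝[>] (0 : ℝ), (φ (x + l • v) - φ x) / l < r)
    (hD_smul : ∀ x v {c : ℝ}, 0 < c → D x (c • v) = c * D x v)
    (hD_mono : ∀ x y, D x (y - x) + D y (x - y) ≤ -μ * ‖x - y‖ ^ 2) :
    StrongConvexOn univ μ φ := by
  refine ⟨convex_univ, fun x _ y _ a b ha hb hab => ?_⟩
  obtain rfl | ha := ha.eq_or_lt
  · obtain rfl : b = 1 := by linarith
    simp
  obtain rfl | hb := hb.eq_or_lt
  · obtain rfl : a = 1 := by linarith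
    simp
  set g₁ := fun t : ℝ => φ (x + t • (b • (y - x)))
  set g₂ := fun t : ℝ => φ (y + t • (a • -(y - x)))
  suffices h : a * g₁ 1 + b * g₂ 1 ≤ a * g₁ 0 + b * g₂ 0 - a * b * μ * ‖x - y‖ ^ 2 / 2 by
    have hz₁ : x + (1 : ℝ) • (b • (y - x)) = a • x + b • y := by
      linear_combination (norm := module) -(hab • x)
    have hz₂ : y + (1 : ℝ) • (a • -(y - x)) = a • x + b • y := by
      linear_combination (norm := module) -(hab • y)
    simp only [g₁, g₂, hz₁, hz₂, zero_smul, add_zero, smul_eq_mul] at h ⊢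
    linear_combination h - φ (a • x + b • y) * hab
  refine le_sub_half_of_slope_lt_mul_sub_one (ψ := fun s => a * g₁ s + b * g₂ s)
    (k := a * b * μ * ‖x - y‖ ^ 2)
    ((continuous_const.mul (continuous_comp_line_of_continuousAt_zero hcont x _)).add
      (continuous_const.mul (continuous_comp_line_of_continuousAt_zero hcont y _))).continuousOn
    fun t ht r hr => ?_
  set p := x + t • (b • (y - x))
  set q := y + t • (a • -(y - x))
  have hpq : q - p = (1 - t) • (y - x) := by
    simp only [p, q]; linear_combination (norm := module) -(t • hab • (y - x))
  have hderiv :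
      a * D p (b • (y - x)) + b * D q (a • -(y - x)) ≤ a * b * μ * ‖x - y‖ ^ 2 * (t - 1) := by
    have h := upperDeriv_add_le_of_sub_eq_smul hD_smul hD_mono (sub_pos.2 ht.2) hpq
    rw [hD_smul _ _ hb, hD_smul _ _ ha, norm_sub_rev]
    nlinarith [mul_pos ha hb]
  set δ := r - (a * D p (b • (y - x)) + b * D q (a • -(y - x)))
  have hδ : 0 < δ := by simp only [δ]; linarith
  filter_upwards [eventually_slope_comp_line_lt hD x (b • (y - x)) t (lt_add_of_pos_right _ hδ),
    eventually_slope_comp_line_lt hD y (a • -(y - x)) t (lt_add_of_pos_right _ hδ)] with z hz₁ hz₂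
  have hsum : slope (fun s => a * g₁ s + b * g₂ s) t z = a * slope g₁ t z + b * slope g₂ t z := by
    simp only [slope_def_field]; ring
  rw [hsum]
  nlinarith [mul_lt_mul_of_pos_left hz₁ ha, mul_lt_mul_of_pos_left hz₂ hb]

end UpperDerivative

theorem strongConvexOn_univ_of_hasLineDerivAt {E : Type*} [NormedAddCommGroup E] [NormedSpace ℝ E]
    {F : E → ℝ} {A : E → E →L[ℝ] ℝ} {m : ℝ} (hF : ∀ u v, HasLineDerivAt ℝ F (A u v) u v)
    (hA : ∀ u v, m * ‖u - v‖ ^ 2 ≤ (A u - A v) (u - v)) :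
    StrongConvexOn univ m F := by
  refine strongConvexOn_univ_of_upperDeriv (D := fun u v => A u v)
    (fun u v => (hF u v).continuousAt) (fun u v r hr => ?_) (fun u v c _ => map_smul _ c v)
    (fun u v => ?_)
  · have hslope := (hasDerivAt_iff_tendsto_slope.1 (hF u v)).eventually (gt_mem_nhds hr)
    filter_upwards [nhdsWithin_mono _ (fun l (hl : 0 < l) => hl.ne') hslope] with l hl
    simpa [slope_def_field] using hl
  · have h := hA v u
    rw [norm_sub_rev] at h
    simp only [sub_apply, map_sub] at h ⊢
    linarith

theorem strongConvexOn_univ_of_clarkeDeriv {X : Type*} [NormedAddCommGroup X] [NormedSpace ℝ X]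
    {j : X → ℝ} {m : ℝ} (hj : LocallyLipschitz j)
    (hmono : ∀ u v, clarkeDeriv j u (v - u) + clarkeDeriv j v (u - v) ≤ m * ‖u - v‖ ^ 2) :
    StrongConvexOn univ (-m) j :=
  strongConvexOn_univ_of_upperDeriv (D := clarkeDeriv j)
    (fun u v => (hj.continuous.comp (by fun_prop : Continuous fun t : ℝ => u + t • v)).continuousAt)
    (fun _ _ _ => hj.eventually_div_lt_of_clarkeDeriv_lt)
    (fun u v _ hc => clarkeDeriv_smul j u v hc)
    (fun u v => by simpa using hmono u v)

theorem StrongConvexOn.comp_continuousLinearMap {E F : Type*} [NormedAddCommGroup E]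
    [NormedSpace ℝ E] [NormedAddCommGroup F] [NormedSpace ℝ F] {f : F → ℝ} {m : ℝ}
    (hf : StrongConvexOn univ m f) (hm : m ≤ 0) (g : E →L[ℝ] F) :
    StrongConvexOn univ (m * ‖g‖ ^ 2) (f ∘ g) := by
  refine ⟨convex_univ, fun x _ y _ a b ha hb hab => ?_⟩
  have h := hf.2 (mem_univ (g x)) (mem_univ (g y)) ha hb hab
  have hg : m * (‖g‖ * ‖x - y‖) ^ 2 ≤ m * ‖g x - g y‖ ^ 2 := by
    rw [← map_sub]
    exact mul_le_mul_of_nonpos_left (pow_le_pow_left₀ (norm_nonneg _) (g.le_opNorm _) 2) hm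
  simp only [Function.comp, map_add, map_smul] at h ⊢
  nlinarith [mul_nonneg ha hb]

theorem stmt1_general
    {V : Type*} [NormedAddCommGroup V] [NormedSpace ℝ V]
    {X : Type*} [NormedAddCommGroup X] [NormedSpace ℝ X]
    (A : V → V →L[ℝ] ℝ) (F_A : V → ℝ)
    (hA_pot : ∀ u v : V, HasLineDerivAt ℝ F_A (A u v) u v)
    (m_A : ℝ)
    (hA_mono : ∀ u v : V, m_A * ‖u - v‖ ^ 2 ≤ (A u - A v) (u - v))
    (J : X → X → ℝ)
    (hJ_lip : ∀ w : X, LocallyLipschitz (J w))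
    (m_α m_L : ℝ) (hm_α : 0 ≤ m_α) (hm_L : 0 ≤ m_L)
    (hJ_mono : ∀ w₁ w₂ v₁ v₂ : X,
      clarkeDeriv (J w₁) v₁ (v₂ - v₁) + clarkeDeriv (J w₂) v₂ (v₁ - v₂)
        ≤ m_α * ‖v₁ - v₂‖ ^ 2 + m_L * ‖w₁ - w₂‖ * ‖v₁ - v₂‖)
    (γ : V →L[ℝ] X) (f : V →L[ℝ] ℝ)
    (hs : (m_α + m_L) * ‖γ‖ ^ 2 < m_A)
    (w : V) :
    StrictConvexOn ℝ (Set.univ : Set V) (fun v : V => F_A v - f v + J (γ w) (γ v)) := by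
  have hF : StrongConvexOn univ m_A F_A := strongConvexOn_univ_of_hasLineDerivAt hA_pot hA_mono
  have hf : UniformConcaveOn univ 0 f :=
    uniformConcaveOn_zero.2 (f.toLinearMap.concaveOn convex_univ)
  have hJ : StrongConvexOn univ (-m_α * ‖γ‖ ^ 2) (J (γ w) ∘ γ) :=
    (strongConvexOn_univ_of_clarkeDeriv (hJ_lip (γ w)) fun u v => by
      simpa using hJ_mono (γ w) (γ w) u v).comp_continuousLinearMap (neg_nonpos.2 hm_α) γ
  have hmod : 0 < m_A - m_α * ‖γ‖ ^ 2 := by nlinarith [sq_nonneg ‖γ‖]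
  refine ((hF.sub hf).add hJ).strictConvexOn fun r hr => ?_
  simp only [Pi.add_apply, add_zero]
  linarith [mul_pos hmod (sq_pos_of_ne_zero hr)]

theorem stmt1
    {V : Type*} [NormedAddCommGroup V] [NormedSpace ℝ V] [CompleteSpace V]
    {X : Type*} [NormedAddCommGroup X] [NormedSpace ℝ X] [CompleteSpace X]
    (hV_refl : Function.Surjective (NormedSpace.inclusionInDoubleDual ℝ V))
    (A : V → V →L[ℝ] ℝ) (F_A : V → ℝ) (L_A : ℝ) (hL_A : 0 < L_A)
    (hA_lip : ∀ u v : V, ‖A u - A v‖ ≤ L_A * ‖u - v‖)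
    (hA_pot : ∀ u v : V, HasLineDerivAt ℝ F_A (A u v) u v)
    (m_A : ℝ) (hm_A : 0 < m_A)
    (hA_mono : ∀ u v : V, m_A * ‖u - v‖ ^ 2 ≤ (A u - A v) (u - v))
    (J : X → X → ℝ)
    (hJ_lip : ∀ w : X, LocallyLipschitz (J w))
    (c₀ c₁ c₂ : ℝ) (hc₀ : 0 ≤ c₀) (hc₁ : 0 ≤ c₁) (hc₂ : 0 ≤ c₂)
    (hJ_bdd : ∀ w v : X, ∀ ξ ∈ clarkeSubdiff (J w) v, ‖ξ‖ ≤ c₀ + c₁ * ‖v‖ + c₂ * ‖w‖)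
    (m_α m_L : ℝ) (hm_α : 0 ≤ m_α) (hm_L : 0 ≤ m_L)
    (hJ_mono : ∀ w₁ w₂ v₁ v₂ : X,
      clarkeDeriv (J w₁) v₁ (v₂ - v₁) + clarkeDeriv (J w₂) v₂ (v₁ - v₂)
        ≤ m_α * ‖v₁ - v₂‖ ^ 2 + m_L * ‖w₁ - w₂‖ * ‖v₁ - v₂‖)
    (γ : V →L[ℝ] X) (f : V →L[ℝ] ℝ)
    (hs : (m_α + m_L) * ‖γ‖ ^ 2 < m_A)
    (w : V) :
    StrictConvexOn ℝ (Set.univ : Set V) (fun v : V => F_A v - f v + J (γ w) (γ v)) :=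
  stmt1_general A F_A hA_pot m_A hA_mono J hJ_lip m_α m_L hm_α hm_L hJ_mono γ f hs w
end

section
/- Under hypotheses H(A), H(J), H(γ,f) and (H_s), for every w ∈ V the functional v ↦ ℒ(w,v) attains its infimum over V at a unique point; hence the operator Λ : V → V, Λw := argmin_{v ∈ V} ℒ(w,v), is well defined. -/
/-!
The functional `g = F_A - f + J (γ w) ∘ γ` is strongly convex with modulus
`m_A - m_α ‖γ‖² > 0`. For `F_A` this is the strong monotonicity of its derivative `A`, integrated
along segments. For `j = J (γ w)`, the relaxed monotonicity of the Clarke derivative (with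
`w₁ = w₂`) bounds the upper right Dini derivatives of `j` along a segment; comparing `j` with a
parabola from both ends of the segment shows that `j` is `(-m_α)`-strongly convex. A lower
semicontinuous strongly convex function on a Banach space is bounded below, its minimizing
filter is Cauchy by the strong convexity inequality at midpoints, and the limit is the unique
minimizer.
-/

open Filter Topology

open Set

section ClarkeDerivative

variable {Y : Type*} [NormedAddCommGroup Y] [NormedSpace ℝ Y] {j : Y → ℝ}

-- `clarkeDeriv j x v` is, by definition, the `limsup` of `clarkeQuotient j v` along
-- `𝓝 x ×ˢ 𝓝[>] 0`.
noncomputable def clarkeQuotient (j : Y → ℝ) (v : Y) (p : Y × ℝ) : ℝ :=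
  (j (p.1 + p.2 • v) - j p.1) / p.2

theorem tendsto_fst_add_snd_smul (x v : Y) :
    Tendsto (fun p : Y × ℝ => p.1 + p.2 • v) (𝓝 x ×ˢ 𝓝[>] (0 : ℝ)) (𝓝 x) := by
  have h0 : Tendsto (fun p : Y × ℝ => p.2) (𝓝 x ×ˢ 𝓝[>] (0 : ℝ)) (𝓝 0) :=
    tendsto_snd.mono_right nhdsWithin_le_nhds
  simpa using (tendsto_fst (g := 𝓝[>] (0 : ℝ))).add (h0.smul_const v)

theorem LocallyLipschitz.isBoundedUnder_clarkeQuotient_s5 (hj : LocallyLipschitz j) (x v : Y) :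
    (𝓝 x ×ˢ 𝓝[>] (0 : ℝ)).IsBoundedUnder (· ≤ ·) (clarkeQuotient j v) ∧
      (𝓝 x ×ˢ 𝓝[>] (0 : ℝ)).IsBoundedUnder (· ≥ ·) (clarkeQuotient j v) := by
  obtain ⟨K, t, ht, hlip⟩ := hj x
  refine isBoundedUnder_le_abs.1 ⟨K * ‖v‖, eventually_map.2 ?_⟩
  filter_upwards [tendsto_fst.eventually ht, (tendsto_fst_add_snd_smul x v).eventually ht,
    tendsto_snd.eventually self_mem_nhdsWithin] with p hp hpv (hpos : 0 < p.2)
  have := hlip.dist_le_mul _ hpv _ hp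
  rw [Real.dist_eq, dist_eq_norm, add_sub_cancel_left, norm_smul, Real.norm_of_nonneg hpos.le]
    at this
  rw [clarkeQuotient, abs_div, abs_of_pos hpos, div_le_iff₀ hpos]
  linarith

theorem LocallyLipschitz.eventually_clarkeQuotient_lt (hj : LocallyLipschitz j) {x v : Y} {r : ℝ}
    (h : clarkeDeriv j x v < r) : ∀ᶠ p in 𝓝 x ×ˢ 𝓝[>] (0 : ℝ), clarkeQuotient j v p < r :=
  eventually_lt_of_limsup_lt h (hj.isBoundedUnder_clarkeQuotient_s5 x v).1

theorem LocallyLipschitz.frequently_lt_clarkeQuotient (hj : LocallyLipschitz j) {x v : Y} {r : ℝ}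
    (h : r < clarkeDeriv j x v) : ∃ᶠ p in 𝓝 x ×ˢ 𝓝[>] (0 : ℝ), r < clarkeQuotient j v p :=
  frequently_lt_of_lt_limsup (hj.isBoundedUnder_clarkeQuotient_s5 x v).2.isCoboundedUnder_le h

theorem LocallyLipschitz.le_clarkeDeriv_of_frequently (hj : LocallyLipschitz j) {x v : Y} {r : ℝ}
    (h : ∃ᶠ p in 𝓝 x ×ˢ 𝓝[>] (0 : ℝ), r ≤ clarkeQuotient j v p) : r ≤ clarkeDeriv j x v :=
  le_limsup_of_frequently_le h (hj.isBoundedUnder_clarkeQuotient_s5 x v).1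

theorem LocallyLipschitz.mul_clarkeDeriv_le (hj : LocallyLipschitz j) {μ : ℝ} (hμ : 0 < μ)
    (x v : Y) : μ * clarkeDeriv j x v ≤ clarkeDeriv j x (μ • v) := by
  refine le_of_forall_lt_imp_le_of_dense fun r hr => hj.le_clarkeDeriv_of_frequently ?_
  have hdiv : Tendsto (fun t : ℝ => t / μ) (𝓝[>] (0 : ℝ)) (𝓝[>] (0 : ℝ)) :=
    ((continuous_id.div_const μ).tendsto' 0 0 (zero_div μ)).inf
      (tendsto_principal_principal.2 fun t ht => div_pos ht hμ)
  have hscale : Tendsto (fun p : Y × ℝ => (p.1, p.2 / μ)) (𝓝 x ×ˢ 𝓝[>] (0 : ℝ))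
      (𝓝 x ×ˢ 𝓝[>] (0 : ℝ)) :=
    tendsto_fst.prodMk (hdiv.comp tendsto_snd)
  refine hscale.frequently ((hj.frequently_lt_clarkeQuotient
    ((div_lt_iff₀' hμ).2 hr)).mono fun p hp => ?_)
  have hq : clarkeQuotient j (μ • v) (p.1, p.2 / μ) = μ * clarkeQuotient j v p := by
    simp only [clarkeQuotient, smul_smul, div_mul_cancel₀ _ hμ.ne']
    field_simp
  rw [hq]
  exact ((div_lt_iff₀' hμ).1 hp).le

theorem LocallyLipschitz.clarkeDeriv_add_clarkeDeriv_neg_nonneg (hj : LocallyLipschitz j)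
    (x v : Y) : 0 ≤ clarkeDeriv j x v + clarkeDeriv j x (-v) := by
  suffices -clarkeDeriv j x v ≤ clarkeDeriv j x (-v) by linarith
  refine le_of_forall_lt_imp_le_of_dense fun r hr => hj.le_clarkeDeriv_of_frequently ?_
  have hshift : Tendsto (fun p : Y × ℝ => (p.1 + p.2 • v, p.2)) (𝓝 x ×ˢ 𝓝[>] (0 : ℝ))
      (𝓝 x ×ˢ 𝓝[>] (0 : ℝ)) :=
    (tendsto_fst_add_snd_smul x v).prodMk tendsto_snd
  refine hshift.frequently (Eventually.frequently ?_)
  filter_upwards [hj.eventually_clarkeQuotient_lt (lt_neg_of_lt_neg hr)] with p hp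
  have hq : clarkeQuotient j (-v) (p.1 + p.2 • v, p.2) = -clarkeQuotient j v p := by
    simp only [clarkeQuotient, smul_neg, add_neg_cancel_right, ← neg_div, neg_sub]
  linarith

theorem LocallyLipschitz.eventually_slope_lt (hj : LocallyLipschitz j) {x v : Y} {t r : ℝ}
    (h : clarkeDeriv j (x + t • v) v < r) :
    ∀ᶠ z in 𝓝[>] t, slope (fun s => j (x + s • v)) t z < r := by
  have hsub : Tendsto (fun z : ℝ => z - t) (𝓝[>] t) (𝓝[>] (0 : ℝ)) :=
    ((continuous_sub_right t).tendsto' t 0 (sub_self t)).inf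
      (tendsto_principal_principal.2 fun z (hz : t < z) => sub_pos.2 hz)
  filter_upwards [(tendsto_const_nhds.prodMk hsub).eventually
    (hj.eventually_clarkeQuotient_lt h)] with z hz
  rwa [slope_def_field, show x + z • v = x + t • v + (z - t) • v by module]

theorem LocallyLipschitz.apply_add_smul_le (hj : LocallyLipschitz j) (x v : Y) {τ c M : ℝ}
    (hτ : 0 ≤ τ) (h : ∀ t ∈ Ico 0 τ, clarkeDeriv j (x + t • v) v ≤ c + M * (τ - t)) :
    j (x + τ • v) ≤ j x + c * τ + M * τ ^ 2 / 2 := by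
  have hB : ∀ t, HasDerivAt (fun t => j x + ((c + M * τ) * t - M / 2 * t ^ 2))
      (c + M * (τ - t)) t := fun t => by
    refine ((((hasDerivAt_id' t).const_mul (c + M * τ)).sub
      ((hasDerivAt_pow 2 t).const_mul (M / 2))).const_add (j x)).congr_deriv ?_
    simp only [Nat.cast_ofNat, mul_one]
    ring
  have := image_le_of_liminf_slope_right_le_deriv_boundary
    (f := fun s => j (x + s • v)) (hj.continuous.comp (by fun_prop)).continuousOn (by simp)
    (fun t _ => (hB t).continuousAt.continuousWithinAt) (fun t _ => (hB t).hasDerivWithinAt)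
    (fun t ht r hr => (hj.eventually_slope_lt ((h t ht).trans_lt hr)).frequently)
    (right_mem_Icc.2 hτ)
  linarith

end ClarkeDerivative

section Semiconvexity

variable {Y : Type*} [NormedAddCommGroup Y] [NormedSpace ℝ Y] {j : Y → ℝ}

theorem LocallyLipschitz.apply_add_smul_le_of_clarkeDeriv_add_le (hj : LocallyLipschitz j)
    (x v : Y) {M τ : ℝ} (hτ₀ : 0 ≤ τ) (hτ₁ : τ ≤ 1)
    (H : ∀ s t, s < t →
      clarkeDeriv j (x + s • v) v + clarkeDeriv j (x + t • v) (-v) ≤ M * (t - s)) :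
    j (x + τ • v) ≤ (1 - τ) * j x + τ * j (x + v) + M / 2 * τ * (1 - τ) := by
  have hfwd : j (x + τ • v) ≤ j x + -clarkeDeriv j (x + τ • v) (-v) * τ + M * τ ^ 2 / 2 :=
    hj.apply_add_smul_le x v hτ₀ fun t ht => by linarith [H t τ ht.2]
  -- the same bound, read from the other end `x + v` of the segment
  have hbwd : j (x + τ • v) ≤ j (x + v) + -clarkeDeriv j (x + τ • v) v * (1 - τ)
      + M * (1 - τ) ^ 2 / 2 := by
    have := hj.apply_add_smul_le (x + v) (-v) (c := -clarkeDeriv j (x + τ • v) v) (M := M)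
      (sub_nonneg.2 hτ₁) fun t ht => by
      rw [show x + v + t • -v = x + (1 - t) • v by module]
      linarith [H τ (1 - t) (by linarith [ht.2])]
    rwa [show x + v + (1 - τ) • -v = x + τ • v by module] at this
  have hPN := hj.clarkeDeriv_add_clarkeDeriv_neg_nonneg (x + τ • v) v
  nlinarith [mul_le_mul_of_nonneg_left hfwd (sub_nonneg.2 hτ₁),
    mul_le_mul_of_nonneg_left hbwd hτ₀, mul_nonneg (mul_nonneg hτ₀ (sub_nonneg.2 hτ₁)) hPN]

theorem LocallyLipschitz.strongConvexOn_neg_of_clarkeDeriv_add_le (hj : LocallyLipschitz j) {m : ℝ}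
    (hmono : ∀ v₁ v₂ : Y,
      clarkeDeriv j v₁ (v₂ - v₁) + clarkeDeriv j v₂ (v₁ - v₂) ≤ m * ‖v₁ - v₂‖ ^ 2) :
    StrongConvexOn univ (-m) j := by
  refine ⟨convex_univ, fun x _ y _ a b ha hb hab => ?_⟩
  obtain rfl : a = 1 - b := eq_sub_of_add_eq hab
  have H : ∀ s t, s < t → clarkeDeriv j (x + s • (y - x)) (y - x)
      + clarkeDeriv j (x + t • (y - x)) (-(y - x)) ≤ m * ‖y - x‖ ^ 2 * (t - s) := by
    intro s t hst
    have hts : 0 < t - s := sub_pos.2 hst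
    have := hmono (x + s • (y - x)) (x + t • (y - x))
    rw [show x + t • (y - x) - (x + s • (y - x)) = (t - s) • (y - x) by module,
      show x + s • (y - x) - (x + t • (y - x)) = (t - s) • -(y - x) by module,
      norm_smul, norm_neg, Real.norm_of_nonneg hts.le] at this
    have h₁ := hj.mul_clarkeDeriv_le hts (x + s • (y - x)) (y - x)
    have h₂ := hj.mul_clarkeDeriv_le hts (x + t • (y - x)) (-(y - x))
    refine le_of_mul_le_mul_left ?_ hts
    nlinarith
  have := hj.apply_add_smul_le_of_clarkeDeriv_add_le x (y - x) hb (by linarith) H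
  rw [show (1 - b) • x + b • y = x + b • (y - x) by module, smul_eq_mul, smul_eq_mul,
    norm_sub_rev x y]
  rw [add_sub_cancel] at this
  linarith

theorem StrongConvexOn.comp_continuousLinearMap_of_nonpos {Z : Type*} [NormedAddCommGroup Z]
    [NormedSpace ℝ Z] {M : ℝ} (hj : StrongConvexOn univ (-M) j) (hM : 0 ≤ M) (γ : Z →L[ℝ] Y) :
    StrongConvexOn univ (-(M * ‖γ‖ ^ 2)) (j ∘ γ) := by
  refine ⟨convex_univ, fun x _ y _ a b ha hb hab => ?_⟩
  have hγ : ‖γ x - γ y‖ ^ 2 ≤ ‖γ‖ ^ 2 * ‖x - y‖ ^ 2 := by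
    rw [← mul_pow, ← map_sub]
    exact pow_le_pow_left₀ (norm_nonneg _) (γ.le_opNorm _) 2
  have := hj.2 (mem_univ (γ x)) (mem_univ (γ y)) ha hb hab
  simp only [Function.comp_apply, map_add, map_smul, smul_eq_mul] at this ⊢
  nlinarith [mul_le_mul_of_nonneg_left hγ (mul_nonneg (mul_nonneg ha hb) hM)]

end Semiconvexity

section Potential

variable {V : Type*} [NormedAddCommGroup V] [NormedSpace ℝ V] {F : V → ℝ} {A : V → V →L[ℝ] ℝ}

theorem hasDerivAt_apply_add_smul_of_hasLineDerivAt
    (hF : ∀ u v, HasLineDerivAt ℝ F (A u v) u v) (x v : V) (t : ℝ) :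
    HasDerivAt (fun s : ℝ => F (x + s • v)) (A (x + t • v) v) t := by
  have h := HasDerivAt.comp_sub_const t t (f := fun s : ℝ => F (x + t • v + s • v))
    (by rw [sub_self]; exact hF (x + t • v) v)
  refine h.congr_of_eventuallyEq (Eventually.of_forall fun s => ?_)
  dsimp only
  congr 1
  module

theorem strongConvexOn_of_hasLineDerivAt (hF : ∀ u v, HasLineDerivAt ℝ F (A u v) u v) {m : ℝ}
    (hA : ∀ u v, m * ‖u - v‖ ^ 2 ≤ (A u - A v) (u - v)) : StrongConvexOn univ m F := by
  refine ⟨convex_univ, fun x _ y _ a b ha hb hab => ?_⟩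
  set d := y - x
  set c := m * ‖d‖ ^ 2
  set χ : ℝ → ℝ := fun t => F (x + t • d) - c / 2 * t ^ 2
  have hχ : ∀ t, HasDerivAt χ (A (x + t • d) d - c * t) t := fun t =>
    ((hasDerivAt_apply_add_smul_of_hasLineDerivAt hF x d t).sub
      ((hasDerivAt_pow 2 t).const_mul (c / 2))).congr_deriv (by ring)
  have hmono : Monotone (deriv χ) := by
    rw [funext fun t => (hχ t).deriv]
    intro s t hst
    obtain rfl | hlt := hst.eq_or_lt
    · exact le_rfl
    have hts : 0 < t - s := sub_pos.2 hlt
    have := hA (x + t • d) (x + s • d)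
    rw [show x + t • d - (x + s • d) = (t - s) • d by module, map_smul, norm_smul,
      Real.norm_of_nonneg hts.le, sub_apply, smul_eq_mul] at this
    have : (t - s) * (c * (t - s)) ≤ (t - s) * (A (x + t • d) d - A (x + s • d) d) := by
      nlinarith
    linarith [le_of_mul_le_mul_left this hts]
  have := (hmono.convexOn_univ_of_deriv fun t => (hχ t).differentiableAt).2
    (mem_univ 0) (mem_univ 1) ha hb hab
  obtain rfl : a = 1 - b := eq_sub_of_add_eq hab
  simp only [χ, smul_eq_mul, mul_zero, mul_one, zero_add, zero_smul, add_zero, one_smul] at this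
  rw [show x + d = y by simp [d], show c = m * ‖y - x‖ ^ 2 from rfl] at this
  rw [show (1 - b) • x + b • y = x + b • d by module, smul_eq_mul, smul_eq_mul, norm_sub_rev]
  linarith

theorem continuous_of_hasLineDerivAt (hF : ∀ u v, HasLineDerivAt ℝ F (A u v) u v)
    (hA : Continuous A) : Continuous F := by
  refine continuous_iff_continuousAt.2 fun u => ?_
  obtain ⟨δ, hδ, hball⟩ := Metric.continuousAt_iff.1 hA.continuousAt 1 one_pos
  refine continuousAt_of_locally_lipschitz hδ (‖A u‖ + 1) fun y hy => ?_
  have hbound : ∀ t ∈ Ico (0 : ℝ) 1, ‖A (u + t • (y - u)) (y - u)‖ ≤ (‖A u‖ + 1) * ‖y - u‖ := by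
    intro t ht
    have hnear : dist (u + t • (y - u)) u < δ := by
      rw [dist_eq_norm, add_sub_cancel_left, norm_smul, Real.norm_of_nonneg ht.1, ← dist_eq_norm]
      exact lt_of_le_of_lt (mul_le_of_le_one_left dist_nonneg ht.2.le) hy
    refine (A _).le_opNorm _ |>.trans (mul_le_mul_of_nonneg_right ?_ (norm_nonneg _))
    linarith [norm_le_norm_add_norm_sub' (A (u + t • (y - u))) (A u),
      (dist_eq_norm _ _).symm.trans_lt (hball hnear)]
  have := norm_image_sub_le_of_norm_deriv_le_segment_01' (f := fun s : ℝ => F (u + s • (y - u)))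
    (fun t _ => (hasDerivAt_apply_add_smul_of_hasLineDerivAt hF u (y - u) t).hasDerivWithinAt)
    hbound
  simpa [dist_eq_norm] using this

end Potential

section Minimization

variable {E : Type*} [NormedAddCommGroup E] [NormedSpace ℝ E] {g : E → ℝ} {m : ℝ}

theorem StrongConvexOn.norm_sub_sq_le (hg : StrongConvexOn univ m g) {μ : ℝ}
    (hμ : ∀ w, μ ≤ g w) (u v : E) : m / 8 * ‖u - v‖ ^ 2 ≤ (g u - μ) / 2 + (g v - μ) / 2 := by
  have := hg.2 (mem_univ u) (mem_univ v) (by norm_num : (0 : ℝ) ≤ 1 / 2)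
    (by norm_num : (0 : ℝ) ≤ 1 / 2) (by norm_num)
  simp only [smul_eq_mul] at this
  linarith [hμ ((1 / 2 : ℝ) • u + (1 / 2 : ℝ) • v)]

theorem StrongConvexOn.bddBelow_range (hg : StrongConvexOn univ m g) (hm : 0 < m) {δ C : ℝ}
    (hδ : 0 < δ) (hC : ∀ v, ‖v‖ < δ → C ≤ g v) : BddBelow (range g) := by
  set D := g 0 - C
  -- convexity along the ray from `0` through a point of norm `< δ` gives a linear lower bound
  have hlin : ∀ v, g 0 - D - D / δ * ‖v‖ ≤ g v := by
    intro v
    set s := δ / (δ + ‖v‖)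
    have hs₀ : 0 < s := by positivity
    have hs₁ : s ≤ 1 := (div_le_one (by positivity)).2 (by linarith [norm_nonneg v])
    have hsv : ‖s • v‖ < δ := by
      rw [norm_smul, Real.norm_of_nonneg hs₀.le, div_mul_eq_mul_div, div_lt_iff₀ (by positivity)]
      nlinarith [norm_nonneg v]
    have hconv := (hg.convexOn fun r => by positivity).2 (mem_univ 0) (mem_univ v)
      (sub_nonneg.2 hs₁) hs₀.le (sub_add_cancel 1 s)
    simp only [smul_zero, zero_add, smul_eq_mul] at hconv
    have key : -D ≤ s * (g v - g 0) := by linarith [hC _ hsv]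
    have hsD : s * (D / δ * (δ + ‖v‖)) = D := by simp only [s]; field_simp
    have hexp : D / δ * (δ + ‖v‖) = D + D / δ * ‖v‖ := by field_simp
    have := (mul_nonneg_iff_of_pos_left hs₀).1
      (show 0 ≤ s * (g v - g 0 + D / δ * (δ + ‖v‖)) by rw [mul_add, hsD]; linarith)
    linarith
  -- one strong-convexity step at the midpoint of `0` and `v` turns it into a quadratic one
  refine ⟨g 0 - 2 * D - (D / δ) ^ 2 / m, ?_⟩
  rintro _ ⟨v, rfl⟩
  have hmid := hg.2 (mem_univ v) (mem_univ 0) (by norm_num : (0 : ℝ) ≤ 1 / 2)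
    (by norm_num : (0 : ℝ) ≤ 1 / 2) (by norm_num)
  simp only [smul_zero, add_zero, sub_zero, smul_eq_mul] at hmid
  have hhalf := hlin ((1 / 2 : ℝ) • v)
  rw [norm_smul, Real.norm_of_nonneg (by norm_num)] at hhalf
  have hsq : 0 ≤ m / 4 * ‖v‖ ^ 2 - D / δ * ‖v‖ + (D / δ) ^ 2 / m := by
    have : m / 4 * ‖v‖ ^ 2 - D / δ * ‖v‖ + (D / δ) ^ 2 / m = (m / 2 * ‖v‖ - D / δ) ^ 2 / m := by
      field_simp
      ring
    rw [this]
    positivity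
  linarith

theorem StrongConvexOn.existsUnique_forall_le [CompleteSpace E] (hg : StrongConvexOn univ m g)
    (hm : 0 < m) (hgc : LowerSemicontinuous g) : ∃! u, ∀ v, g u ≤ g v := by
  obtain ⟨δ, hδ, hnear⟩ := Metric.eventually_nhds_iff.1 (hgc 0 (g 0 - 1) (by linarith))
  have hbdd := hg.bddBelow_range hm hδ (C := g 0 - 1) fun v hv =>
    (hnear (by simpa using hv)).le
  set μ := sInf (range g)
  have hμ : ∀ w, μ ≤ g w := fun w => csInf_le hbdd (mem_range_self w)
  -- the sublevel sets `{g < μ + ε}` form a Cauchy filter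
  have hF : (comap g (𝓝 μ)).NeBot := comap_neBot fun t ht => by
    obtain ⟨_, hmem, v, rfl⟩ :=
      mem_closure_iff_nhds.1 (csInf_mem_closure (range_nonempty g) hbdd) t ht
    exact ⟨v, hmem⟩
  have hcauchy : Cauchy (comap g (𝓝 μ)) := by
    refine Metric.cauchy_iff.2 ⟨hF, fun ε hε => ⟨g ⁻¹' Iio (μ + m * ε ^ 2 / 16),
      preimage_mem_comap (Iio_mem_nhds (lt_add_of_pos_right μ (by positivity))),
      fun u hu v hv => ?_⟩⟩
    have := hg.norm_sub_sq_le hμ u v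
    simp only [mem_preimage, mem_Iio] at hu hv
    rw [dist_eq_norm]
    refine lt_of_pow_lt_pow_left₀ 2 hε.le ?_
    nlinarith
  obtain ⟨u, hu⟩ := CompleteSpace.complete hcauchy
  have hmin : g u ≤ μ := by
    by_contra! h
    obtain ⟨μ', hμ₁, hμ₂⟩ := exists_between h
    obtain ⟨v, hv₁, hv₂⟩ := ((tendsto_comap.eventually (Iio_mem_nhds hμ₁)).and
      (hu (hgc u μ' hμ₂))).exists
    exact lt_asymm hv₁ hv₂
  refine ⟨u, fun v => hmin.trans (hμ v), fun v hv => ?_⟩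
  exact (hg.strictConvexOn hm).eq_of_isMinOn (isMinOn_univ_iff.2 hv)
    (isMinOn_univ_iff.2 fun w => hmin.trans (hμ w)) (mem_univ v) (mem_univ u)

end Minimization

theorem stmt5_general
    {V : Type*} [NormedAddCommGroup V] [NormedSpace ℝ V] [CompleteSpace V]
    {X : Type*} [NormedAddCommGroup X] [NormedSpace ℝ X]
    (A : V → V →L[ℝ] ℝ) (F_A : V → ℝ) (L_A : ℝ)
    (hA_lip : ∀ u v : V, ‖A u - A v‖ ≤ L_A * ‖u - v‖)
    (hA_pot : ∀ u v : V, HasLineDerivAt ℝ F_A (A u v) u v)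
    (m_A : ℝ)
    (hA_mono : ∀ u v : V, m_A * ‖u - v‖ ^ 2 ≤ (A u - A v) (u - v))
    (J : X → X → ℝ)
    (hJ_lip : ∀ w : X, LocallyLipschitz (J w))
    (m_α m_L : ℝ) (hm_α : 0 ≤ m_α) (hm_L : 0 ≤ m_L)
    (hJ_mono : ∀ w₁ w₂ v₁ v₂ : X,
      clarkeDeriv (J w₁) v₁ (v₂ - v₁) + clarkeDeriv (J w₂) v₂ (v₁ - v₂)
        ≤ m_α * ‖v₁ - v₂‖ ^ 2 + m_L * ‖w₁ - w₂‖ * ‖v₁ - v₂‖)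
    (γ : V →L[ℝ] X) (f : V →L[ℝ] ℝ)
    (hs : (m_α + m_L) * ‖γ‖ ^ 2 < m_A)
    (w : V) :
    ∃! u : V, ∀ v : V,
      F_A u - f u + J (γ w) (γ u) ≤ F_A v - f v + J (γ w) (γ v) := by
  have hA : Continuous A :=
    (LipschitzWith.of_dist_le' fun u v => by simpa only [dist_eq_norm] using hA_lip u v).continuous
  have hj : StrongConvexOn univ (-(m_α * ‖γ‖ ^ 2)) (J (γ w) ∘ γ) :=
    ((hJ_lip (γ w)).strongConvexOn_neg_of_clarkeDeriv_add_le fun v₁ v₂ => by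
      simpa using hJ_mono (γ w) (γ w) v₁ v₂).comp_continuousLinearMap_of_nonpos hm_α γ
  have hg : StrongConvexOn univ (m_A - m_α * ‖γ‖ ^ 2) (F_A - ⇑f + J (γ w) ∘ γ) :=
    (((strongConvexOn_of_hasLineDerivAt hA_pot hA_mono).sub
      (f.toLinearMap.concaveOn convex_univ).uniformConcaveOn_zero).add hj).mono
      fun r => le_of_eq (by simp only [Pi.add_apply, Pi.zero_apply]; ring)
  have hgc : Continuous (F_A - ⇑f + J (γ w) ∘ γ) :=
    ((continuous_of_hasLineDerivAt hA_pot hA).sub f.continuous).add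
      ((hJ_lip (γ w)).continuous.comp γ.continuous)
  exact hg.existsUnique_forall_le (by nlinarith [sq_nonneg ‖γ‖]) hgc.lowerSemicontinuous

theorem stmt5
    {V : Type*} [NormedAddCommGroup V] [NormedSpace ℝ V] [CompleteSpace V]
    {X : Type*} [NormedAddCommGroup X] [NormedSpace ℝ X] [CompleteSpace X]
    (hV_refl : Function.Surjective (NormedSpace.inclusionInDoubleDual ℝ V))
    (A : V → V →L[ℝ] ℝ) (F_A : V → ℝ) (L_A : ℝ) (hL_A : 0 < L_A)
    (hA_lip : ∀ u v : V, ‖A u - A v‖ ≤ L_A * ‖u - v‖)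
    (hA_pot : ∀ u v : V, HasLineDerivAt ℝ F_A (A u v) u v)
    (m_A : ℝ) (hm_A : 0 < m_A)
    (hA_mono : ∀ u v : V, m_A * ‖u - v‖ ^ 2 ≤ (A u - A v) (u - v))
    (J : X → X → ℝ)
    (hJ_lip : ∀ w : X, LocallyLipschitz (J w))
    (c₀ c₁ c₂ : ℝ) (hc₀ : 0 ≤ c₀) (hc₁ : 0 ≤ c₁) (hc₂ : 0 ≤ c₂)
    (hJ_bdd : ∀ w v : X, ∀ ξ ∈ clarkeSubdiff (J w) v, ‖ξ‖ ≤ c₀ + c₁ * ‖v‖ + c₂ * ‖w‖)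
    (m_α m_L : ℝ) (hm_α : 0 ≤ m_α) (hm_L : 0 ≤ m_L)
    (hJ_mono : ∀ w₁ w₂ v₁ v₂ : X,
      clarkeDeriv (J w₁) v₁ (v₂ - v₁) + clarkeDeriv (J w₂) v₂ (v₁ - v₂)
        ≤ m_α * ‖v₁ - v₂‖ ^ 2 + m_L * ‖w₁ - w₂‖ * ‖v₁ - v₂‖)
    (γ : V →L[ℝ] X) (f : V →L[ℝ] ℝ)
    (hs : (m_α + m_L) * ‖γ‖ ^ 2 < m_A)
    (w : V) :
    ∃! u : V, ∀ v : V,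
      F_A u - f u + J (γ w) (γ u) ≤ F_A v - f v + J (γ w) (γ v) :=
  stmt5_general A F_A L_A hA_lip hA_pot m_A hA_mono J hJ_lip m_α m_L hm_α hm_L hJ_mono γ f hs w
end

section
/- Under hypotheses H(A), H(J), H(γ,f) and (H_s), the operator Λ : V → V defined by Λw := argmin_{v ∈ V} ℒ(w,v) is a contraction: there exists a constant k with 0 ≤ k < 1 such that ‖Λw₁ − Λw₂‖_V ≤ k‖w₁ − w₂‖_V for all w₁, w₂ ∈ V. -/
open Filter Topology

lemma varineq {V X : Type*} [NormedAddCommGroup V] [NormedSpace ℝ V]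
    [NormedAddCommGroup X] [NormedSpace ℝ X]
    (A : V → V →L[ℝ] ℝ) (F_A : V → ℝ)
    (hA_pot : ∀ u v : V, HasLineDerivAt ℝ F_A (A u v) u v)
    (J : X → X → ℝ) (hJ_lip : ∀ w : X, LocallyLipschitz (J w))
    (γ : V →L[ℝ] X) (f : V →L[ℝ] ℝ) (w u : V)
    (hmin : ∀ v : V, F_A u - f u + J (γ w) (γ u) ≤ F_A v - f v + J (γ w) (γ v))
    (d : V) :
    0 ≤ A u d - f d + clarkeDeriv (J (γ w)) (γ u) (γ d) := by
  set F : Filter ℝ := nhdsWithin (0 : ℝ) (Set.Ioi (0 : ℝ)) with hF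
  have hFne : F.NeBot := nhdsGT_neBot 0
  set Q : X × ℝ → ℝ := fun p => (J (γ w) (p.1 + p.2 • γ d) - J (γ w) p.1) / p.2 with hQ
  set q : ℝ → ℝ := fun t => (J (γ w) (γ u + t • γ d) - J (γ w) (γ u)) / t with hq
  set p : ℝ → ℝ := fun t => (F_A (u + t • d) - F_A u) / t with hp'
  -- convergence of p
  have hp : Tendsto p F (𝓝 (A u d)) := by
    have := (hA_pot u d).tendsto_slope_zero_right
    simpa [hp', smul_eq_mul, div_eq_inv_mul] using this
  -- lower bound
  have h1 : ∀ᶠ t in F, f d - p t ≤ q t := by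
    filter_upwards [self_mem_nhdsWithin] with t ht
    have htpos : (0 : ℝ) < t := ht
    have key : 0 ≤ F_A (u + t • d) - F_A u - t * f d
        + (J (γ w) (γ u + t • γ d) - J (γ w) (γ u)) := by
      have h := hmin (u + t • d)
      simp only [map_add, map_smul, smul_eq_mul] at h
      linarith
    have hdiv := div_nonneg key htpos.le
    rw [add_div, sub_div, mul_div_cancel_left₀ _ (ne_of_gt htpos)] at hdiv
    simp only [hp', hq]
    linarith
  -- Lipschitz upper bound
  obtain ⟨K, s, hs_mem, hK⟩ := hJ_lip (γ w) (γ u)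
  obtain ⟨ε, hε, hball⟩ := Metric.mem_nhds_iff.1 hs_mem
  set δ : ℝ := ε / (2 * (‖γ d‖ + 1)) with hδ
  have hδpos : 0 < δ := by positivity
  set C : ℝ := K * ‖γ d‖ with hC
  have hub : ∀ᶠ pr in (𝓝 (γ u)) ×ˢ F, Q pr ≤ C := by
    have h1' : Metric.ball (γ u) (ε / 2) ∈ 𝓝 (γ u) := Metric.ball_mem_nhds _ (by positivity)
    have h2' : Set.Ioo (0 : ℝ) δ ∈ F := by
      rw [hF]
      exact Ioo_mem_nhdsGT_of_mem ⟨le_refl _, hδpos⟩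
    filter_upwards [Filter.prod_mem_prod h1' h2'] with pr hpr
    obtain ⟨hpr1, hpr2⟩ := hpr
    have htpos : 0 < pr.2 := hpr2.1
    have hnorm : ‖pr.2 • γ d‖ = pr.2 * ‖γ d‖ := by
      rw [norm_smul, Real.norm_eq_abs, abs_of_pos htpos]
    have hmemA : pr.1 ∈ s := hball (Metric.ball_subset_ball (by linarith) hpr1)
    have hmemB : pr.1 + pr.2 • γ d ∈ s := by
      apply hball
      have h3 : dist (pr.1 + pr.2 • γ d) (γ u) ≤ dist pr.1 (γ u) + ‖pr.2 • γ d‖ := by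
        rw [dist_eq_norm, dist_eq_norm]
        calc ‖pr.1 + pr.2 • γ d - γ u‖ = ‖(pr.1 - γ u) + pr.2 • γ d‖ := by
              rw [add_sub_right_comm]
          _ ≤ ‖pr.1 - γ u‖ + ‖pr.2 • γ d‖ := norm_add_le _ _
      have h4 : pr.2 * ‖γ d‖ ≤ δ * (‖γ d‖ + 1) := by
        have := hpr2.2
        nlinarith [norm_nonneg (γ d)]
      have h5 : δ * (‖γ d‖ + 1) = ε / 2 := by
        rw [hδ]; field_simp
      have := Metric.mem_ball.1 hpr1
      simp only [Metric.mem_ball]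
      rw [hnorm] at h3
      linarith
    have hlip := hK.dist_le_mul _ hmemB _ hmemA
    have : J (γ w) (pr.1 + pr.2 • γ d) - J (γ w) pr.1 ≤ K * (pr.2 * ‖γ d‖) := by
      have hd : dist (pr.1 + pr.2 • γ d) pr.1 = pr.2 * ‖γ d‖ := by
        rw [dist_eq_norm, add_sub_cancel_left, hnorm]
      rw [hd] at hlip
      calc J (γ w) (pr.1 + pr.2 • γ d) - J (γ w) pr.1
          ≤ |J (γ w) (pr.1 + pr.2 • γ d) - J (γ w) pr.1| := le_abs_self _
        _ = dist (J (γ w) (pr.1 + pr.2 • γ d)) (J (γ w) pr.1) := (Real.dist_eq _ _).symm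
        _ ≤ K * (pr.2 * ‖γ d‖) := hlip
    rw [hQ, hC]
    calc (J (γ w) (pr.1 + pr.2 • γ d) - J (γ w) pr.1) / pr.2
        ≤ (K * (pr.2 * ‖γ d‖)) / pr.2 := by gcongr
      _ = K * ‖γ d‖ := by field_simp
  -- relate q to Q along the embedding t ↦ (γ u, t)
  have htend : Tendsto (fun t : ℝ => ((γ u : X), t)) F ((𝓝 (γ u)) ×ˢ F) :=
    Filter.Tendsto.prodMk tendsto_const_nhds tendsto_id
  have hq_ub : ∀ᶠ t in F, q t ≤ C := htend.eventually hub
  have hbd_q : F.IsBoundedUnder (· ≤ ·) q := ⟨C, eventually_map.2 hq_ub⟩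
  have hpt : Tendsto (fun t => f d - p t) F (𝓝 (f d - A u d)) := tendsto_const_nhds.sub hp
  have hcob : F.IsCoboundedUnder (· ≤ ·) (fun t => f d - p t) := hpt.isCoboundedUnder_le
  have step1 : f d - A u d ≤ limsup q F := by
    rw [← hpt.limsup_eq]
    exact limsup_le_limsup h1 hcob hbd_q
  have hlb : ∀ᶠ t in F, (f d - A u d) - 1 ≤ q t := by
    have h2 : ∀ᶠ t in F, (f d - A u d) - 1 ≤ f d - p t :=
      hpt.eventually (eventually_ge_nhds (by linarith))
    filter_upwards [h1, h2] with t ha hb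
    linarith
  have hcobQ : (Filter.map (fun t : ℝ => ((γ u : X), t)) F).IsCoboundedUnder (· ≤ ·) Q := by
    have : (Filter.map (fun t : ℝ => ((γ u : X), t)) F).IsBoundedUnder (· ≥ ·) Q := by
      refine ⟨(f d - A u d) - 1, ?_⟩
      rw [Filter.eventually_map]
      rw [Filter.eventually_map]
      exact hlb
    exact this.isCoboundedUnder_le
  have hbdQ : ((𝓝 (γ u)) ×ˢ F).IsBoundedUnder (· ≤ ·) Q := ⟨C, eventually_map.2 hub⟩
  have step2 : limsup q F ≤ clarkeDeriv (J (γ w)) (γ u) (γ d) := by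
    have heq : limsup q F = limsup Q (Filter.map (fun t : ℝ => ((γ u : X), t)) F) := by
      rw [Filter.limsup, Filter.limsup, Filter.map_map]
      rfl
    rw [heq]
    exact limsup_le_limsup_of_le htend hcobQ hbdQ
  linarith

theorem stmt6
    {V : Type*} [NormedAddCommGroup V] [NormedSpace ℝ V] [CompleteSpace V]
    {X : Type*} [NormedAddCommGroup X] [NormedSpace ℝ X] [CompleteSpace X]
    (hV_refl : Function.Surjective (NormedSpace.inclusionInDoubleDual ℝ V))
    (A : V → V →L[ℝ] ℝ) (F_A : V → ℝ) (L_A : ℝ) (hL_A : 0 < L_A)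
    (hA_lip : ∀ u v : V, ‖A u - A v‖ ≤ L_A * ‖u - v‖)
    (hA_pot : ∀ u v : V, HasLineDerivAt ℝ F_A (A u v) u v)
    (m_A : ℝ) (hm_A : 0 < m_A)
    (hA_mono : ∀ u v : V, m_A * ‖u - v‖ ^ 2 ≤ (A u - A v) (u - v))
    (J : X → X → ℝ)
    (hJ_lip : ∀ w : X, LocallyLipschitz (J w))
    (c₀ c₁ c₂ : ℝ) (hc₀ : 0 ≤ c₀) (hc₁ : 0 ≤ c₁) (hc₂ : 0 ≤ c₂)
    (hJ_bdd : ∀ w v : X, ∀ ξ ∈ clarkeSubdiff (J w) v, ‖ξ‖ ≤ c₀ + c₁ * ‖v‖ + c₂ * ‖w‖)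
    (m_α m_L : ℝ) (hm_α : 0 ≤ m_α) (hm_L : 0 ≤ m_L)
    (hJ_mono : ∀ w₁ w₂ v₁ v₂ : X,
      clarkeDeriv (J w₁) v₁ (v₂ - v₁) + clarkeDeriv (J w₂) v₂ (v₁ - v₂)
        ≤ m_α * ‖v₁ - v₂‖ ^ 2 + m_L * ‖w₁ - w₂‖ * ‖v₁ - v₂‖)
    (γ : V →L[ℝ] X) (f : V →L[ℝ] ℝ)
    (hs : (m_α + m_L) * ‖γ‖ ^ 2 < m_A)
    (Λ : V → V)
    (hΛ : ∀ w v : V, F_A (Λ w) - f (Λ w) + J (γ w) (γ (Λ w))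
            ≤ F_A v - f v + J (γ w) (γ v)) :
    ∃ k : ℝ, 0 ≤ k ∧ k < 1 ∧ ∀ w₁ w₂ : V, ‖Λ w₁ - Λ w₂‖ ≤ k * ‖w₁ - w₂‖ := by
  have hγ2 : (0:ℝ) ≤ ‖γ‖ ^ 2 := sq_nonneg _
  set β : ℝ := m_A - m_α * ‖γ‖ ^ 2 with hβ
  have hβpos : 0 < β := by nlinarith
  refine ⟨m_L * ‖γ‖ ^ 2 / β, by positivity, ?_, ?_⟩
  · rw [div_lt_one hβpos]; nlinarith
  intro w₁ w₂
  set u₁ := Λ w₁ with hu₁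
  set u₂ := Λ w₂ with hu₂
  have h₁ := varineq A F_A hA_pot J hJ_lip γ f w₁ u₁ (fun v => hΛ w₁ v) (u₂ - u₁)
  have h₂ := varineq A F_A hA_pot J hJ_lip γ f w₂ u₂ (fun v => hΛ w₂ v) (u₁ - u₂)
  have hmono := hA_mono u₁ u₂
  have hJm := hJ_mono (γ w₁) (γ w₂) (γ u₁) (γ u₂)
  rw [ContinuousLinearMap.sub_apply] at hmono
  have e1 : γ u₂ - γ u₁ = γ (u₂ - u₁) := (map_sub γ u₂ u₁).symm
  have e2 : γ u₁ - γ u₂ = γ (u₁ - u₂) := (map_sub γ u₁ u₂).symm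
  rw [e1, e2] at hJm
  set r : ℝ := ‖u₁ - u₂‖ with hr
  set W : ℝ := ‖w₁ - w₂‖ with hW
  set a : ℝ := ‖γ (u₁ - u₂)‖ with hA'
  clear_value a r W
  have ha : a ≤ ‖γ‖ * r := by rw [hA', hr]; exact γ.le_opNorm _
  have hb : ‖γ w₁ - γ w₂‖ ≤ ‖γ‖ * W := by
    rw [← map_sub, hW]; exact γ.le_opNorm _
  have hfsum : f (u₂ - u₁) + f (u₁ - u₂) = 0 := by
    rw [map_sub, map_sub]; ring
  have hAsum : A u₁ (u₂ - u₁) + A u₂ (u₁ - u₂)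
      = -(A u₁ (u₁ - u₂) - A u₂ (u₁ - u₂)) := by
    simp only [map_sub]; ring
  have hnn1 : (0:ℝ) ≤ a := hA' ▸ norm_nonneg _
  have hnn2 : (0:ℝ) ≤ ‖γ w₁ - γ w₂‖ := norm_nonneg _
  have hrnn : (0:ℝ) ≤ r := hr ▸ norm_nonneg _
  have hWnn : (0:ℝ) ≤ W := hW ▸ norm_nonneg _
  have hγnn : (0:ℝ) ≤ ‖γ‖ := norm_nonneg _
  have key : m_A * r ^ 2 ≤ m_α * ‖γ‖ ^ 2 * r ^ 2 + m_L * ‖γ‖ ^ 2 * W * r := by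
    have m1 : a * a ≤ (‖γ‖ * r) * (‖γ‖ * r) := mul_le_mul ha ha hnn1 (by positivity)
    have m2 : ‖γ w₁ - γ w₂‖ * a ≤ (‖γ‖ * W) * (‖γ‖ * r) := mul_le_mul hb ha hnn1 (by positivity)
    have t1 : m_α * (a * a) ≤ m_α * ((‖γ‖ * r) * (‖γ‖ * r)) :=
      mul_le_mul_of_nonneg_left m1 hm_α
    have t2 : m_L * (‖γ w₁ - γ w₂‖ * a) ≤ m_L * ((‖γ‖ * W) * (‖γ‖ * r)) :=
      mul_le_mul_of_nonneg_left m2 hm_L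
    linarith [h₁, h₂, hmono, hJm, hfsum, hAsum, t1, t2]
  rcases eq_or_lt_of_le hrnn with h0 | hrpos
  · rw [← h0]
    positivity
  · have h5 : β * r ≤ m_L * ‖γ‖ ^ 2 * W := by
      have h6 : β * r * r ≤ (m_L * ‖γ‖ ^ 2 * W) * r := by nlinarith
      exact le_of_mul_le_mul_right h6 hrpos
    rw [div_mul_eq_mul_div, le_div_iff₀ hβpos]
    linarith [h5]
end

section
/- Under hypotheses H(A), H(J), H(γ,f) and (H_s), Problem P_incl has at most one solution: if u₁, u₂ ∈ V and there exist z₁ ∈ ∂₂J(γu₁, γu₁) and z₂ ∈ ∂₂J(γu₂, γu₂) with ⟨Au_i, v⟩ + ⟨z_i, γv⟩ = ⟨f, v⟩ for all v ∈ V (i = 1,2), then u₁ = u₂. -/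
open Filter Topology

theorem stmt8
    {V : Type*} [NormedAddCommGroup V] [NormedSpace ℝ V] [CompleteSpace V]
    {X : Type*} [NormedAddCommGroup X] [NormedSpace ℝ X] [CompleteSpace X]
    (hV_refl : Function.Surjective (NormedSpace.inclusionInDoubleDual ℝ V))
    (A : V → V →L[ℝ] ℝ) (F_A : V → ℝ) (L_A : ℝ) (hL_A : 0 < L_A)
    (hA_lip : ∀ u v : V, ‖A u - A v‖ ≤ L_A * ‖u - v‖)
    (hA_pot : ∀ u v : V, HasLineDerivAt ℝ F_A (A u v) u v)
    (m_A : ℝ) (hm_A : 0 < m_A)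
    (hA_mono : ∀ u v : V, m_A * ‖u - v‖ ^ 2 ≤ (A u - A v) (u - v))
    (J : X → X → ℝ)
    (hJ_lip : ∀ w : X, LocallyLipschitz (J w))
    (c₀ c₁ c₂ : ℝ) (hc₀ : 0 ≤ c₀) (hc₁ : 0 ≤ c₁) (hc₂ : 0 ≤ c₂)
    (hJ_bdd : ∀ w v : X, ∀ ξ ∈ clarkeSubdiff (J w) v, ‖ξ‖ ≤ c₀ + c₁ * ‖v‖ + c₂ * ‖w‖)
    (m_α m_L : ℝ) (hm_α : 0 ≤ m_α) (hm_L : 0 ≤ m_L)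
    (hJ_mono : ∀ w₁ w₂ v₁ v₂ : X,
      clarkeDeriv (J w₁) v₁ (v₂ - v₁) + clarkeDeriv (J w₂) v₂ (v₁ - v₂)
        ≤ m_α * ‖v₁ - v₂‖ ^ 2 + m_L * ‖w₁ - w₂‖ * ‖v₁ - v₂‖)
    (γ : V →L[ℝ] X) (f : V →L[ℝ] ℝ)
    (hs : (m_α + m_L) * ‖γ‖ ^ 2 < m_A)
    (u₁ u₂ : V)
    (z₁ : X →L[ℝ] ℝ) (hz₁ : z₁ ∈ clarkeSubdiff (J (γ u₁)) (γ u₁))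
    (hu₁ : ∀ v : V, A u₁ v + z₁ (γ v) = f v)
    (z₂ : X →L[ℝ] ℝ) (hz₂ : z₂ ∈ clarkeSubdiff (J (γ u₂)) (γ u₂))
    (hu₂ : ∀ v : V, A u₂ v + z₂ (γ v) = f v) :
    u₁ = u₂ := by
  have hd1 := hz₁ (γ u₂ - γ u₁)
  have hd2 := hz₂ (γ u₁ - γ u₂)
  have hmono := hJ_mono (γ u₁) (γ u₂) (γ u₁) (γ u₂)
  have hγ : ‖γ u₁ - γ u₂‖ ≤ ‖γ‖ * ‖u₁ - u₂‖ := by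
    calc ‖γ u₁ - γ u₂‖ = ‖γ (u₁ - u₂)‖ := by rw [map_sub]
    _ ≤ ‖γ‖ * ‖u₁ - u₂‖ := γ.le_opNorm _
  -- key: strong monotonicity
  have hsm := hA_mono u₁ u₂
  have key : (A u₁ - A u₂) (u₁ - u₂)
      = z₁ (γ u₂ - γ u₁) + z₂ (γ u₁ - γ u₂) := by
    have e1 := hu₁ (u₁ - u₂)
    have e2 := hu₂ (u₁ - u₂)
    simp only [ContinuousLinearMap.sub_apply, map_sub] at *
    linarith
  have hbound : m_A * ‖u₁ - u₂‖ ^ 2 ≤ (m_α + m_L) * ‖γ‖ ^ 2 * ‖u₁ - u₂‖ ^ 2 := by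
    have h1 : m_A * ‖u₁ - u₂‖ ^ 2 ≤ m_α * ‖γ u₁ - γ u₂‖ ^ 2 + m_L * ‖γ u₁ - γ u₂‖ * ‖γ u₁ - γ u₂‖ := by
      calc m_A * ‖u₁ - u₂‖ ^ 2 ≤ (A u₁ - A u₂) (u₁ - u₂) := hsm
      _ = z₁ (γ u₂ - γ u₁) + z₂ (γ u₁ - γ u₂) := key
      _ ≤ clarkeDeriv (J (γ u₁)) (γ u₁) (γ u₂ - γ u₁)
          + clarkeDeriv (J (γ u₂)) (γ u₂) (γ u₁ - γ u₂) := add_le_add hd1 hd2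
      _ ≤ m_α * ‖γ u₁ - γ u₂‖ ^ 2 + m_L * ‖γ u₁ - γ u₂‖ * ‖γ u₁ - γ u₂‖ := hmono
    have hnn : (0:ℝ) ≤ ‖γ u₁ - γ u₂‖ := norm_nonneg _
    have hnn2 : (0:ℝ) ≤ ‖γ‖ * ‖u₁ - u₂‖ :=
      mul_nonneg (norm_nonneg _) (norm_nonneg _)
    have hsq : ‖γ u₁ - γ u₂‖ ^ 2 ≤ (‖γ‖ * ‖u₁ - u₂‖) ^ 2 := by
      exact pow_le_pow_left₀ hnn hγ 2
    nlinarith [mul_le_mul_of_nonneg_left hsq hm_α, mul_le_mul_of_nonneg_left hsq hm_L]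
  have hz : ‖u₁ - u₂‖ ^ 2 ≤ 0 := by nlinarith
  have : u₁ - u₂ = 0 := by
    have := norm_nonneg (u₁ - u₂)
    have hn : ‖u₁ - u₂‖ = 0 := by nlinarith
    exact norm_eq_zero.mp hn
  exact sub_eq_zero.mp this
end

section
/- Under hypotheses H(A), H(J), H(γ,f) and (H_s), the hemivariational inequality has at most one solution: if u₁, u₂ ∈ V both satisfy ⟨Au_i, v⟩ + J₂⁰(γu_i, γu_i; γv) ≥ ⟨f, v⟩ for all v ∈ V (i = 1,2), then u₁ = u₂. -/
open Filter Topology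

theorem stmt16
    {V : Type*} [NormedAddCommGroup V] [NormedSpace ℝ V] [CompleteSpace V]
    {X : Type*} [NormedAddCommGroup X] [NormedSpace ℝ X] [CompleteSpace X]
    (hV_refl : Function.Surjective (NormedSpace.inclusionInDoubleDual ℝ V))
    (A : V → V →L[ℝ] ℝ) (F_A : V → ℝ) (L_A : ℝ) (hL_A : 0 < L_A)
    (hA_lip : ∀ u v : V, ‖A u - A v‖ ≤ L_A * ‖u - v‖)
    (hA_pot : ∀ u v : V, HasLineDerivAt ℝ F_A (A u v) u v)
    (m_A : ℝ) (hm_A : 0 < m_A)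
    (hA_mono : ∀ u v : V, m_A * ‖u - v‖ ^ 2 ≤ (A u - A v) (u - v))
    (J : X → X → ℝ)
    (hJ_lip : ∀ w : X, LocallyLipschitz (J w))
    (c₀ c₁ c₂ : ℝ) (hc₀ : 0 ≤ c₀) (hc₁ : 0 ≤ c₁) (hc₂ : 0 ≤ c₂)
    (hJ_bdd : ∀ w v : X, ∀ ξ ∈ clarkeSubdiff (J w) v, ‖ξ‖ ≤ c₀ + c₁ * ‖v‖ + c₂ * ‖w‖)
    (m_α m_L : ℝ) (hm_α : 0 ≤ m_α) (hm_L : 0 ≤ m_L)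
    (hJ_mono : ∀ w₁ w₂ v₁ v₂ : X,
      clarkeDeriv (J w₁) v₁ (v₂ - v₁) + clarkeDeriv (J w₂) v₂ (v₁ - v₂)
        ≤ m_α * ‖v₁ - v₂‖ ^ 2 + m_L * ‖w₁ - w₂‖ * ‖v₁ - v₂‖)
    (γ : V →L[ℝ] X) (f : V →L[ℝ] ℝ)
    (hs : (m_α + m_L) * ‖γ‖ ^ 2 < m_A)
    (u₁ u₂ : V)
    (hu₁ : ∀ v : V, f v ≤ A u₁ v + clarkeDeriv (J (γ u₁)) (γ u₁) (γ v))
    (hu₂ : ∀ v : V, f v ≤ A u₂ v + clarkeDeriv (J (γ u₂)) (γ u₂) (γ v)) :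
    u₁ = u₂ := by
  by_contra hne
  have hd : (0:ℝ) < ‖u₁ - u₂‖ := by
    simpa [norm_sub_pos_iff] using sub_ne_zero.mpr hne
  have h1 := hu₁ (u₂ - u₁)
  have h2 := hu₂ (u₁ - u₂)
  have hmono := hJ_mono (γ u₁) (γ u₂) (γ u₁) (γ u₂)
  have hA := hA_mono u₁ u₂
  have hγsub1 : γ (u₂ - u₁) = γ u₂ - γ u₁ := map_sub γ u₂ u₁
  have hγsub2 : γ (u₁ - u₂) = γ u₁ - γ u₂ := map_sub γ u₁ u₂
  have hsum : (0:ℝ) ≤ A u₁ (u₂ - u₁) + A u₂ (u₁ - u₂)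
      + (clarkeDeriv (J (γ u₁)) (γ u₁) (γ u₂ - γ u₁)
        + clarkeDeriv (J (γ u₂)) (γ u₂) (γ u₁ - γ u₂)) := by
    have := add_le_add h1 h2
    rw [hγsub1] at h1
    rw [hγsub2] at h2
    have h0 : f (u₂ - u₁) + f (u₁ - u₂) = 0 := by
      rw [← map_add]; simp
    nlinarith [add_le_add h1 h2]
  have hAeq : A u₁ (u₂ - u₁) + A u₂ (u₁ - u₂) = -((A u₁ - A u₂) (u₁ - u₂)) := by
    simp [ContinuousLinearMap.sub_apply, map_sub]
    ring
  have hγn : ‖γ u₁ - γ u₂‖ ≤ ‖γ‖ * ‖u₁ - u₂‖ := by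
    calc ‖γ u₁ - γ u₂‖ = ‖γ (u₁ - u₂)‖ := by rw [map_sub]
    _ ≤ ‖γ‖ * ‖u₁ - u₂‖ := γ.le_opNorm _
  have hγn0 : (0:ℝ) ≤ ‖γ u₁ - γ u₂‖ := norm_nonneg _
  have key : m_A * ‖u₁ - u₂‖ ^ 2 ≤ (m_α + m_L) * ‖γ‖ ^ 2 * ‖u₁ - u₂‖ ^ 2 := by
    have h3 : m_α * ‖γ u₁ - γ u₂‖ ^ 2 + m_L * ‖γ u₁ - γ u₂‖ * ‖γ u₁ - γ u₂‖
        ≤ (m_α + m_L) * (‖γ‖ * ‖u₁ - u₂‖) ^ 2 := by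
      nlinarith [sq_nonneg (‖γ u₁ - γ u₂‖), mul_le_mul hγn hγn hγn0 (by positivity : (0:ℝ) ≤ ‖γ‖ * ‖u₁ - u₂‖)]
    nlinarith [hsum, hA, hmono]
  nlinarith [key, mul_pos (sub_pos.mpr hs) (pow_pos hd 2)]
end
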